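/- Computational completeness for ℜ_d: for every formula φ₀ of 𝓛, if there exist a deterministic Kripke model ⟨W, →, ⊩⟩ and a world w ∈ W with w ⊮ φ₀, then φ₀ is not a tautology of the enumeration ξ of deterministic partial recursive functions. -/

import Mathlib

/-- Formulas of the modal language 𝓛: propositional variables, ⊥, →, and ▷. -/
inductive Formula : Type
  | var : ℕ → Formula
  | bot : Formula
  | imp : Formula → Formula → Formula
  | tri : Formula → Formula → Formula
deriving DecidableEq

namespace Formula

/-- ¬φ := φ → ⊥ -/
def neg (φ : Formula) : Formula := imp φ bot
/-- ⊤ := ¬⊥ -/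
def top : Formula := neg bot
/-- φ ∨ ψ := ¬φ → ψ -/
def disj (φ ψ : Formula) : Formula := imp (neg φ) ψ
/-- φ ∧ ψ := ¬(φ → ¬ψ) -/
def conj (φ ψ : Formula) : Formula := neg (imp φ (neg ψ))

/-- `φ` is a substitution instance of a classical propositional tautology:
it evaluates to `true` under every boolean valuation of formulas that
respects `⊥` and `→` (variables and `▷`-formulas are treated as atoms). -/
def IsPropTaut (φ : Formula) : Prop :=
  ∀ v : Formula → Bool, v bot = false →
    (∀ a b, v (imp a b) = (!(v a) || v b)) → v φ = true

/-- Hilbert-style provability.  `Prv false` is the logic ℜ (axioms: classical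
tautologies, A1, A2, A3; rules: Modus Ponens and monotonicity M);
`Prv true` is the logic ℜ_d, which additionally has axiom A4. -/
inductive Prv : Bool → Formula → Prop
  | taut {d : Bool} {φ} : IsPropTaut φ → Prv d φ
  | a1 {d : Bool} (φ ψ χ) : Prv d (imp (tri φ ψ) (imp (tri χ ψ) (tri (disj φ χ) ψ)))
  | a2 {d : Bool} (φ) : Prv d (tri bot φ)
  | a3 {d : Bool} (φ) : Prv d (tri φ top)
  | a4 (φ ψ χ) : Prv true (imp (tri φ ψ) (imp (tri φ χ) (tri φ (conj ψ χ))))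
  | mp {d : Bool} {φ ψ} : Prv d (imp φ ψ) → Prv d φ → Prv d ψ
  | mono {d : Bool} {φ₁ φ₂ ψ₁ ψ₂} : Prv d (imp φ₁ φ₂) → Prv d (imp ψ₁ ψ₂) →
      Prv d (imp (tri φ₂ ψ₁) (tri φ₁ ψ₂))

/-- `Deriv d Δ φ`: φ is derivable from the hypotheses Δ together with all
theorems of the logic (`Prv d`) using only Modus Ponens. -/
inductive Deriv (d : Bool) (Δ : Set Formula) : Formula → Prop
  | hyp {φ} : φ ∈ Δ → Deriv d Δ φ
  | thm {φ} : Prv d φ → Deriv d Δ φ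
  | mp {φ ψ} : Deriv d Δ (imp φ ψ) → Deriv d Δ φ → Deriv d Δ ψ

/-- Conjunction of a list of formulas (empty conjunction is ⊤). -/
def conjList : List Formula → Formula
  | [] => top
  | φ :: l => conj φ (conjList l)

/-- ⋀Γ : conjunction of all formulas of a finite set Γ (⋀∅ = ⊤). -/
noncomputable def bigConj (Γ : Finset Formula) : Formula := conjList Γ.toList

/-- A set of formulas is consistent if ⊥ is not derivable from it. -/
def Consistent (d : Bool) (Δ : Set Formula) : Prop := ¬ Deriv d Δ bot

/-- The pair (u,v) is w-consistent: w ⊬ ⋀u ▷ ¬⋀v. -/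
def WCons (d : Bool) (w : Set Formula) (u v : Finset Formula) : Prop :=
  ¬ Deriv d w (tri (bigConj u) (neg (bigConj v)))

/-- The operation ∼: ∼(¬φ) = φ, and ∼φ = ¬φ if φ is not a negation. -/
def simNeg : Formula → Formula
  | imp φ bot => φ
  | φ => neg φ

/-- Φ is closed under subformulas. -/
def SubClosed (Φ : Finset Formula) : Prop :=
  (∀ a b, imp a b ∈ Φ → a ∈ Φ ∧ b ∈ Φ) ∧ (∀ a b, tri a b ∈ Φ → a ∈ Φ ∧ b ∈ Φ)

/-- Φ is closed under the operation ∼. -/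
def SimClosed (Φ : Finset Formula) : Prop := ∀ φ ∈ Φ, simNeg φ ∈ Φ

/-- w is a maximal consistent subset of Φ: w ⊆ Φ, w is consistent, and for
every φ ∈ Φ either φ ∈ w or ∼φ ∈ w. -/
def MaxCons (d : Bool) (Φ : Finset Formula) (w : Finset Formula) : Prop :=
  w ⊆ Φ ∧ Consistent d ↑w ∧ ∀ φ ∈ Φ, φ ∈ w ∨ simNeg φ ∈ w

/-- Kripke forcing: `rel w u v` means u →_w v, `val w p` means w ⊩ p. -/
def Forces {W : Type*} (rel : W → W → W → Prop) (val : W → ℕ → Prop) :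
    W → Formula → Prop
  | w, var p => val w p
  | _, bot => False
  | w, imp a b => Forces rel val w a → Forces rel val w b
  | w, tri a b => ∀ u v, rel w u v → Forces rel val u a →
      ∃ v', rel w u v' ∧ Forces rel val v' b

end Formula

/-- A Kripke model: a finite set of worlds, a ternary computability relation,
and a forcing relation between worlds and propositional variables. -/
structure KripkeModel where
  W : Type
  fin : Finite W
  rel : W → W → W → Prop
  val : W → ℕ → Prop

/-- A Kripke model is deterministic if for all worlds w, u there is at most
one v with u →_w v. -/
def KripkeModel.Deterministic (M : KripkeModel) : Prop :=
  ∀ w u v v', M.rel w u v → M.rel w u v' → v = v'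

/-- Forcing in a Kripke model. -/
def KripkeModel.Forces (M : KripkeModel) : M.W → Formula → Prop :=
  Formula.Forces M.rel M.val

/-- The standard enumeration of nondeterministic partial recursive functions:
ζ_w(u) = the set of possible outputs of machine (code) w on input u. -/
def zeta (w u : ℕ) : Set ℕ :=
  {v | ((Denumerable.ofNat Nat.Partrec.Code w).eval (Nat.pair u v)).Dom}

/-- The standard enumeration of deterministic partial recursive functions:
ξ_w(u) = the value of the partial recursive function with code w on input u. -/
def xi (w u : ℕ) : Part ℕ :=
  (Denumerable.ofNat Nat.Partrec.Code w).eval u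

namespace Formula

/-- Set semantics for nondeterministic partial recursive functions
(existential reading of ▷). -/
def semN (val : ℕ → Set ℕ) : Formula → Set ℕ
  | var p => val p
  | bot => ∅
  | imp a b => (Set.univ \ semN val a) ∪ semN val b
  | tri a b => {w | ∀ u ∈ semN val a, zeta w u ≠ ∅ → zeta w u ∩ semN val b ≠ ∅}

/-- Set semantics for deterministic partial recursive functions. -/
def semD (val : ℕ → Set ℕ) : Formula → Set ℕ
  | var p => val p
  | bot => ∅
  | imp a b => (Set.univ \ semD val a) ∪ semD val b
  | tri a b => {w | ∀ u ∈ semD val a, ∀ h : (xi w u).Dom, (xi w u).get h ∈ semD val b}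

/-- Universal set semantics for nondeterministic partial recursive functions:
every terminating computation path from φ* ends in ψ*. -/
def semU (val : ℕ → Set ℕ) : Formula → Set ℕ
  | var p => val p
  | bot => ∅
  | imp a b => (Set.univ \ semU val a) ∪ semU val b
  | tri a b => {w | ∀ u ∈ semU val a, zeta w u ⊆ semU val b}

/-- A canonical injective encoding of formulas as natural numbers. -/
def enc : Formula → ℕ
  | var n => 4 * n
  | bot => 1
  | imp a b => 4 * Nat.pair (enc a) (enc b) + 2
  | tri a b => 4 * Nat.pair (enc a) (enc b) + 3

end Formula

/-!
A finite deterministic Kripke model embeds into the enumeration ξ. By Kleene's recursion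
theorem there is a program `c` whose curried instances `C w := curry c w` satisfy
ξ_{C w}(C u) = C v whenever u →_w v, and diverge on every other input (in particular on
numbers that are not codes of worlds). Interpreting each variable p as the set of codes of
worlds forcing p, induction on formulas gives C w ∈ φ* ↔ w ⊩ φ; the ▷ case uses that ξ is
single-valued, matching the determinism of the model. A world refuting φ₀ thus yields a
number outside φ₀*.
-/

theorem List.getElem?_idxOf_map_eq_some_iff {α β : Type*} [DecidableEq β] {l : List α}
    {g : α → β} (hg : Function.Injective g) (hl : ∀ a, a ∈ l) (a : α) (b : β) :
    l[(l.map g).idxOf b]? = some a ↔ g a = b := by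
  by_cases hb : b ∈ l.map g
  · have hlt : (l.map g).idxOf b < l.length := by
      simpa using List.idxOf_lt_length_iff.2 hb
    have hget : g l[(l.map g).idxOf b] = b := by
      have := List.getElem_idxOf (List.idxOf_lt_length_iff.2 hb)
      rwa [List.getElem_map] at this
    rw [List.getElem?_eq_getElem hlt, Option.some_inj]
    exact ⟨fun h => h ▸ hget, fun h => hg (hget.trans h.symm)⟩
  · rw [List.getElem?_eq_none (by simpa using (List.idxOf_eq_length_iff.2 hb).ge)]
    exact ⟨nofun, fun h => absurd (h ▸ List.mem_map_of_mem (hl a)) hb⟩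

structure IsXiEmbedding {W : Type*} (rel : W → W → W → Prop) (C : W → ℕ) : Prop where
  injective : Function.Injective C
  mem_xi_iff : ∀ w n m, m ∈ xi (C w) n ↔ ∃ u, C u = n ∧ ∃ v, rel w u v ∧ C v = m

section TableProgram

open Nat.Partrec Encodable

variable {W : Type*} [Primcodable W]

def worldCode (c : Code) (w : W) : ℕ := encode (c.curry (encode w))

theorem worldCode_injective (c : Code) : Function.Injective (worldCode (W := W) c) :=
  fun _ _ h => encode_injective (Code.curry_inj (encode_injective h)).2

theorem primrec₂_worldCode : Primrec₂ (worldCode (W := W)) :=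
  Primrec.encode.comp (Code.primrec₂_curry.comp .fst (Primrec.encode.comp .snd))

/-- On input `⟨w, m⟩`, where `m` codes the world `u` of `l`, outputs the code of `T w u`. -/
def tableProgram (l : List W) (T : W → W → Option W) (c : Code) (n : ℕ) : Option ℕ :=
  (decode (α := W) n.unpair.1).bind fun w =>
    l[(l.map (worldCode c)).idxOf n.unpair.2]?.bind fun u => (T w u).map (worldCode c)

theorem primrec₂_tableProgram [Finite W] (l : List W) (T : W → W → Option W) :
    Primrec₂ (tableProgram l T) := by
  have hlookup : Primrec₂ fun (c : Code) (m : ℕ) => l[(l.map (worldCode c)).idxOf m]? :=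
    (Primrec.list_getElem?₁ l).comp <| Primrec.list_idxOf.comp .snd
      (Primrec.list_map (Primrec.const l) (primrec₂_worldCode.comp (Primrec.fst.comp .fst) .snd))
  have hT : Primrec₂ T := Primrec.dom_finite fun p : W × W => T p.1 p.2
  have hstep : Primrec₂ fun (p : (Code × ℕ) × W) (u : W) => (T p.2 u).map (worldCode p.1.1) :=
    Primrec.option_map (hT.comp (Primrec.snd.comp .fst) .snd)
      (primrec₂_worldCode.comp (Primrec.fst.comp (Primrec.fst.comp (Primrec.fst.comp .fst))) .snd)
  have hinner : Primrec₂ fun (p : Code × ℕ) (w : W) =>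
      l[(l.map (worldCode p.1)).idxOf p.2.unpair.2]?.bind fun u => (T w u).map (worldCode p.1) :=
    Primrec.option_bind
      (f := fun q : (Code × ℕ) × W => l[(l.map (worldCode q.1.1)).idxOf q.1.2.unpair.2]?)
      (hlookup.comp (Primrec.fst.comp .fst)
        (Primrec.snd.comp (Primrec.unpair.comp (Primrec.snd.comp .fst)))) hstep
  exact Primrec.option_bind
    (Primrec.decode.comp (Primrec.fst.comp (Primrec.unpair.comp .snd))) hinner

end TableProgram

open Nat.Partrec in
theorem exists_isXiEmbedding_of_table {W : Type*} [Finite W] (T : W → W → Option W) :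
    ∃ C : W → ℕ, IsXiEmbedding (fun w u v => T w u = some v) C := by
  obtain ⟨k, ⟨e⟩⟩ := Finite.exists_equiv_fin W
  let _ : Primcodable W := Primcodable.ofEquiv (Fin k) e
  let l : List W := (List.finRange k).map e.symm
  have hl : ∀ a, a ∈ l := fun a => List.mem_map.2 ⟨e a, List.mem_finRange _, e.symm_apply_apply a⟩
  -- Recursion theorem: the program `c` may consult the codes `curry c w` of all worlds.
  obtain ⟨c, hc⟩ := Code.fixed_point₂
    (Computable.ofOption (primrec₂_tableProgram l T).to_comp).to₂
  refine ⟨worldCode c, worldCode_injective c, fun w n m => ?_⟩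
  have hxi : xi (worldCode c w) n = tableProgram l T c (Nat.pair (Encodable.encode w) n) := by
    simp only [xi, worldCode, Denumerable.ofNat_encode, Code.eval_curry, hc]
  simp only [hxi, tableProgram, Nat.unpair_pair, Encodable.encodek, Option.bind_some,
    Part.mem_ofOption, Option.mem_def, Option.bind_eq_some_iff, Option.map_eq_some_iff,
    List.getElem?_idxOf_map_eq_some_iff (worldCode_injective c) hl]

theorem KripkeModel.Deterministic.exists_isXiEmbedding {M : KripkeModel} (hM : M.Deterministic) :
    ∃ C : M.W → ℕ, IsXiEmbedding M.rel C := by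
  classical
  have : Finite M.W := M.fin
  let T (w u : M.W) : Option M.W := if h : ∃ v, M.rel w u v then some h.choose else none
  have hT : (fun w u v => T w u = some v) = M.rel := by
    funext w u v
    by_cases h : ∃ v, M.rel w u v
    · simp only [T, dif_pos h, Option.some_inj, eq_iff_iff]
      exact ⟨fun e => e ▸ h.choose_spec, hM w u _ _ h.choose_spec⟩
    · simp only [T, dif_neg h, reduceCtorEq, false_iff, eq_iff_iff]
      exact fun hv => h ⟨v, hv⟩
  obtain ⟨C, hC⟩ := exists_isXiEmbedding_of_table T
  exact ⟨C, hT ▸ hC⟩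

namespace IsXiEmbedding

variable {W : Type*} {rel : W → W → W → Prop} {C : W → ℕ}

theorem rel_functional (hC : IsXiEmbedding rel C) {w u v v' : W} (h : rel w u v)
    (h' : rel w u v') : v = v' :=
  hC.injective <| Part.mem_unique ((hC.mem_xi_iff _ _ _).2 ⟨u, rfl, v, h, rfl⟩)
    ((hC.mem_xi_iff _ _ _).2 ⟨u, rfl, v', h', rfl⟩)

open Formula in
theorem mem_semD_iff_forces (hC : IsXiEmbedding rel C) (val : W → ℕ → Prop) (φ : Formula)
    (w : W) : C w ∈ semD (fun p => C '' {w | val w p}) φ ↔ Forces rel val w φ := by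
  induction φ generalizing w with
  | var p => exact hC.injective.mem_set_image
  | bot => simp only [semD, Forces, Set.mem_empty_iff_false]
  | imp a b iha ihb =>
    simp only [semD, Forces, Set.mem_union, Set.mem_sdiff, Set.mem_univ, true_and, iha, ihb]
    tauto
  | tri a b iha ihb =>
    simp only [semD, Forces, Set.mem_ofPred_eq]
    constructor
    · intro hsem u v huv hua
      obtain ⟨hdom, hget⟩ := (hC.mem_xi_iff _ _ _).2 ⟨u, rfl, v, huv, rfl⟩
      exact ⟨v, huv, (ihb v).1 (hget ▸ hsem _ ((iha u).2 hua) hdom)⟩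
    · intro hF n hn hdom
      obtain ⟨u, rfl, v, huv, hv⟩ := (hC.mem_xi_iff _ _ _).1 (Part.get_mem hdom)
      obtain ⟨v', huv', hv'⟩ := hF u v huv ((iha u).1 hn)
      rw [← hv, hC.rel_functional huv huv']
      exact (ihb v').2 hv'

end IsXiEmbedding

open Formula in
/-- Computational completeness for ℜ_d: if some world of some deterministic
Kripke model does not force φ₀, then φ₀ is not a tautology of the enumeration
ξ of deterministic partial recursive functions. -/
theorem computational_completeness_Rd (φ₀ : Formula)
    (h : ∃ (M : KripkeModel), M.Deterministic ∧ ∃ w : M.W, ¬ M.Forces w φ₀) :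
    ¬ ∀ val : ℕ → Set ℕ, semD val φ₀ = Set.univ := by
  obtain ⟨M, hM, w₀, hw₀⟩ := h
  obtain ⟨C, hC⟩ := hM.exists_isXiEmbedding
  intro htaut
  exact hw₀ ((hC.mem_semD_iff_forces M.val φ₀ w₀).1 (htaut _ ▸ Set.mem_univ _))
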